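/- arXiv:2605.15039 — 5 statements merged into one kernel-verified Lean document; each statement's English description precedes it below -/
import Mathlib

section
/- If a graph H is topologically contained in a graph G, then the line graph L(H) is a minor of the line graph L(G). -/
/-!
A subdivision of `H` in `G` sends each edge `uv` of `H` to a nontrivial `φ u`–`φ v` path of `G`,
and paths of distinct edges share no edge of `G`. The edge sets of these paths, viewed as vertex
sets of `L(G)`, are the branch sets: the edges of a walk are connected in the line graph, and if
two edges of `H` meet at `w`, the two paths both pass through `φ w`, so an edge of each at `φ w`
gives an edge of `L(G)` between the branch sets.
-/

open SimpleGraph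

/-- `H` is a minor of `G`: there is a family of nonempty, pairwise disjoint,
connected branch sets in `G`, one for each vertex of `H`, such that adjacent
vertices of `H` have branch sets joined by an edge of `G`. -/
def SimpleGraph.IsMinorOf {W V : Type*} (H : SimpleGraph W) (G : SimpleGraph V) : Prop :=
  ∃ φ : W → Set V,
    (∀ w, (φ w).Nonempty) ∧
    (∀ w, (G.induce (φ w)).Connected) ∧
    (Pairwise fun w₁ w₂ => Disjoint (φ w₁) (φ w₂)) ∧
    (∀ ⦃w₁ w₂⦄, H.Adj w₁ w₂ → ∃ a ∈ φ w₁, ∃ b ∈ φ w₂, G.Adj a b)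

/-- `H` is topologically contained in `G`: some subgraph of `G` is a
subdivision of `H`. Concretely, there is an injection `φ` of the vertices of
`H` into `G` together with a family of paths of `G` representing the edges of
`H`, such that distinct paths meet only in common endpoints and the interior
of each path avoids the branch vertices. -/
def TopologicallyContained {W V : Type*} (H : SimpleGraph W) (G : SimpleGraph V) : Prop :=
  ∃ φ : W ↪ V, ∃ P : ∀ ⦃u v : W⦄, H.Adj u v → G.Walk (φ u) (φ v),
    (∀ ⦃u v : W⦄ (h : H.Adj u v), (P h).IsPath) ∧
    (∀ ⦃u v : W⦄ (h : H.Adj u v) (w : W), φ w ∈ (P h).support → w = u ∨ w = v) ∧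
    (∀ ⦃u v : W⦄ (h : H.Adj u v) ⦃u' v' : W⦄ (h' : H.Adj u' v'),
      s(u, v) ≠ s(u', v') → ∀ x, x ∈ (P h).support → x ∈ (P h').support →
        (x = φ u ∨ x = φ v) ∧ (x = φ u' ∨ x = φ v'))

namespace SimpleGraph

variable {V W : Type*} {G : SimpleGraph V}

lemma preconnected_induce_of_subsingleton {s : Set V} (hs : s.Subsingleton) :
    (G.induce s).Preconnected :=
  haveI := hs.coe_sort
  Preconnected.of_subsingleton

namespace Walk

variable {u v x : V}

def lineGraphSupport (p : G.Walk u v) : Set G.edgeSet :=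
  {e | (e : Sym2 V) ∈ p.edges}

lemma connected_induce_lineGraphSupport_cons (h : G.Adj x u) (q : G.Walk u v) :
    (G.lineGraph.induce (cons h q).lineGraphSupport).Connected := by
  induction q generalizing x with
  | nil =>
    have : Nonempty (cons h nil).lineGraphSupport :=
      ⟨⟨⟨s(x, _), G.mem_edgeSet.mpr h⟩, by simp [lineGraphSupport]⟩⟩
    refine ⟨preconnected_induce_of_subsingleton ?_⟩
    rintro ⟨a, _⟩ ha ⟨b, _⟩ hb
    simp only [lineGraphSupport, edges_cons, edges_nil, List.mem_singleton,
      Set.mem_ofPred_eq] at ha hb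
    exact Subtype.ext (ha.trans hb.symm)
  | @cons u w v h' q ih =>
    have hsplit : (cons h (cons h' q)).lineGraphSupport =
        {⟨s(x, u), G.mem_edgeSet.mpr h⟩} ∪ (cons h' q).lineGraphSupport := by
      ext ⟨e, he⟩
      simp [lineGraphSupport, Subtype.ext_iff]
    rw [hsplit]
    by_cases hmem : s(x, u) ∈ (cons h' q).edges
    · have hsub : {⟨s(x, u), G.mem_edgeSet.mpr h⟩} ⊆ (cons h' q).lineGraphSupport :=
        Set.singleton_subset_iff.mpr hmem
      rw [Set.union_eq_right.mpr hsub]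
      exact ih h'
    · have hne : s(x, u) ≠ s(u, w) := fun heq => hmem (heq ▸ by simp)
      have hadj : G.lineGraph.Adj ⟨s(x, u), h⟩ ⟨s(u, w), h'⟩ :=
        lineGraph_adj_iff_exists.mpr ⟨Subtype.coe_ne_coe.mp hne, u, by simp, by simp⟩
      exact connected_induce_union (preconnected_induce_of_subsingleton Set.subsingleton_singleton)
        (ih h').preconnected rfl (by simp [lineGraphSupport]) hadj

lemma connected_induce_lineGraphSupport {p : G.Walk u v} (hp : ¬p.Nil) :
    (G.lineGraph.induce p.lineGraphSupport).Connected := by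
  cases p with
  | nil => exact absurd Nil.nil hp
  | cons h q => exact connected_induce_lineGraphSupport_cons h q

lemma lineGraphSupport_nonempty {p : G.Walk u v} (hp : ¬p.Nil) : p.lineGraphSupport.Nonempty :=
  Set.nonempty_coe_sort.mp (connected_induce_lineGraphSupport hp).nonempty

lemma apply_mem_support_of_mem {f : W → V} {a b w : W} (p : G.Walk (f a) (f b))
    (hw : w ∈ s(a, b)) : f w ∈ p.support := by
  rcases Sym2.mem_iff.mp hw with rfl | rfl
  · exact p.start_mem_support
  · exact p.end_mem_support

lemma disjoint_edges_of_common_support_endpoints {a b c d : V} (p : G.Walk a b) (q : G.Walk c d)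
    (hne : s(a, b) ≠ s(c, d))
    (hmeet : ∀ x ∈ p.support, x ∈ q.support → (x = a ∨ x = b) ∧ (x = c ∨ x = d)) :
    p.edges.Disjoint q.edges := by
  intro e hp hq
  induction e using Sym2.ind with
  | _ x y =>
    have hxy : x ≠ y := (p.adj_of_mem_edges hp).ne
    obtain ⟨hxp, hxq⟩ := hmeet x (p.fst_mem_support_of_mem_edges hp)
      (q.fst_mem_support_of_mem_edges hq)
    obtain ⟨hyp, hyq⟩ := hmeet y (p.snd_mem_support_of_mem_edges hp)
      (q.snd_mem_support_of_mem_edges hq)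
    exact hne (Sym2.eq_of_ne_mem hxy (Sym2.mem_iff.mpr hxp) (Sym2.mem_iff.mpr hyp)
      (Sym2.mem_iff.mpr hxq) (Sym2.mem_iff.mpr hyq))

lemma exists_lineGraph_adj_of_mem_support {a b c d : V} {p : G.Walk a b} {q : G.Walk c d}
    (hp : ¬p.Nil) (hq : ¬q.Nil) (hpq : p.edges.Disjoint q.edges)
    (hxp : x ∈ p.support) (hxq : x ∈ q.support) :
    ∃ e ∈ p.lineGraphSupport, ∃ e' ∈ q.lineGraphSupport, G.lineGraph.Adj e e' := by
  obtain ⟨e, he, hxe⟩ := (mem_support_iff_exists_mem_edges_of_not_nil hp).mp hxp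
  obtain ⟨e', he', hxe'⟩ := (mem_support_iff_exists_mem_edges_of_not_nil hq).mp hxq
  have hne : e ≠ e' := fun heq => hpq he (heq ▸ he')
  exact ⟨⟨e, p.edges_subset_edgeSet he⟩, he, ⟨e', q.edges_subset_edgeSet he'⟩, he',
    lineGraph_adj_iff_exists.mpr ⟨Subtype.coe_ne_coe.mp hne, x, hxe, hxe'⟩⟩

end Walk

theorem lineGraph_isMinorOf_of_edgeDisjoint_walks {H : SimpleGraph W} (f : W → V)
    (P : ∀ ⦃u v : W⦄, H.Adj u v → G.Walk (f u) (f v))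
    (hnil : ∀ ⦃u v : W⦄ (h : H.Adj u v), ¬(P h).Nil)
    (hdisj : ∀ ⦃u v : W⦄ (h : H.Adj u v) ⦃u' v' : W⦄ (h' : H.Adj u' v'),
      s(u, v) ≠ s(u', v') → (P h).edges.Disjoint (P h').edges) :
    H.lineGraph.IsMinorOf G.lineGraph := by
  have hrep : ∀ e : H.edgeSet, ∃ u v, ∃ h : H.Adj u v, (e : Sym2 W) = s(u, v) := by
    rintro ⟨e, he⟩
    induction e using Sym2.ind with
    | _ u v => exact ⟨u, v, he, rfl⟩
  choose u v hadj hrep using hrep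
  have hQdisj : Pairwise fun e e' => (P (hadj e)).edges.Disjoint (P (hadj e')).edges :=
    fun e e' hne => hdisj _ _ (by rwa [← hrep, ← hrep, Ne, ← Subtype.ext_iff])
  refine ⟨fun e => (P (hadj e)).lineGraphSupport,
    fun e => Walk.lineGraphSupport_nonempty (hnil _),
    fun e => Walk.connected_induce_lineGraphSupport (hnil _),
    fun e e' hne => Set.disjoint_left.mpr fun a ha ha' => hQdisj hne ha ha', ?_⟩
  intro e e' hee'
  obtain ⟨hne, w, hw, hw'⟩ := lineGraph_adj_iff_exists.mp hee'
  rw [hrep] at hw hw'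
  exact Walk.exists_lineGraph_adj_of_mem_support (hnil _) (hnil _) (hQdisj hne)
    (Walk.apply_mem_support_of_mem _ hw) (Walk.apply_mem_support_of_mem _ hw')

end SimpleGraph

theorem stmt4 {W V : Type*} (H : SimpleGraph W) (G : SimpleGraph V)
    (h : TopologicallyContained H G) :
    H.lineGraph.IsMinorOf G.lineGraph := by
  obtain ⟨φ, P, -, -, hmeet⟩ := h
  refine lineGraph_isMinorOf_of_edgeDisjoint_walks φ P
    (fun u v huv => Walk.not_nil_of_ne (φ.injective.ne huv.ne)) ?_
  intro u v huv u' v' huv' hne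
  refine Walk.disjoint_edges_of_common_support_endpoints _ _ ?_ (hmeet huv huv' hne)
  rwa [← Sym2.map_mk, ← Sym2.map_mk, (Sym2.map.injective φ.injective).ne_iff]
end

section
/- The line graph of the cube graph contains W₆ as a minor. -/
open SimpleGraph

/-- The wheel `Wₙ`: a hub (`none`) joined to every vertex of a cycle of length `n`. -/
def wheel (n : ℕ) : SimpleGraph (Option (ZMod n)) :=
  SimpleGraph.fromRel fun a b =>
    (a = none ∧ b ≠ none) ∨ (∃ i j : ZMod n, a = some i ∧ b = some j ∧ j = i + 1)

/-- The cube graph `Q₃`: vertices are `Fin 3 → Bool`, two vertices adjacent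
iff they differ in exactly one coordinate. -/
def cubeGraph : SimpleGraph (Fin 3 → Bool) :=
  SimpleGraph.fromRel fun a b => {i : Fin 3 | a i ≠ b i}.ncard = 1

namespace StmtAux

abbrev V := Fin 3 → Bool

def v000 : V := ![false,false,false]
def v100 : V := ![true,false,false]
def v110 : V := ![true,true,false]
def v111 : V := ![true,true,true]
def v011 : V := ![false,true,true]
def v001 : V := ![false,false,true]
def v010 : V := ![false,true,false]

lemma cubeAdj (a b : V) (k : Fin 3) (h : ∀ i, (a i ≠ b i) ↔ i = k) :
    cubeGraph.Adj a b := by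
  have hs : {i : Fin 3 | a i ≠ b i} = {k} := Set.ext h
  have hn : ({i : Fin 3 | a i ≠ b i}).ncard = 1 := by rw [hs]; simp
  have hab : a ≠ b := fun hab => ((h k).mpr rfl) (by rw [hab])
  rw [cubeGraph, SimpleGraph.fromRel_adj]
  exact ⟨hab, Or.inl hn⟩

def E (a b : V) (k : Fin 3) (h : ∀ i, (a i ≠ b i) ↔ i = k) : cubeGraph.edgeSet :=
  ⟨s(a, b), cubeAdj a b k h⟩

def c0 : cubeGraph.edgeSet := E v000 v100 0 (by decide)
def c1 : cubeGraph.edgeSet := E v100 v110 1 (by decide)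
def c2 : cubeGraph.edgeSet := E v110 v111 2 (by decide)
def c3 : cubeGraph.edgeSet := E v111 v011 0 (by decide)
def c4 : cubeGraph.edgeSet := E v011 v001 1 (by decide)
def c5 : cubeGraph.edgeSet := E v001 v000 2 (by decide)
def h0 : cubeGraph.edgeSet := E v010 v000 1 (by decide)
def h1 : cubeGraph.edgeSet := E v010 v110 0 (by decide)
def h2 : cubeGraph.edgeSet := E v010 v011 2 (by decide)

def cyc (i : ZMod 6) : cubeGraph.edgeSet := ![c0, c1, c2, c3, c4, c5] i

def hub : Set cubeGraph.edgeSet := {h0, h1, h2}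

lemma ladj (e f : cubeGraph.edgeSet) (hne : e.val ≠ f.val) (v : V)
    (he : v ∈ e.val) (hf : v ∈ f.val) : cubeGraph.lineGraph.Adj e f := by
  rw [SimpleGraph.lineGraph_adj_iff_exists]
  exact ⟨fun h => hne (congrArg Subtype.val h), v, he, hf⟩

lemma hub_mem_v010 : ∀ e ∈ hub, v010 ∈ e.val := by
  rintro e (rfl | rfl | rfl) <;> exact Sym2.mem_mk_left _ _

lemma cyc_val_ne : ∀ i j : Fin 6, i ≠ j →
    (![c0, c1, c2, c3, c4, c5] i).val ≠ (![c0, c1, c2, c3, c4, c5] j).val := by decide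

lemma cyc_ne_hub : ∀ i : Fin 6, (![c0, c1, c2, c3, c4, c5] i).val ≠ h0.val ∧
    (![c0, c1, c2, c3, c4, c5] i).val ≠ h1.val ∧
    (![c0, c1, c2, c3, c4, c5] i).val ≠ h2.val := by decide

lemma hubAdj : ∀ i : ZMod 6, ∃ a ∈ hub, cubeGraph.lineGraph.Adj a (cyc i) := by
  intro i
  fin_cases i
  · exact ⟨h0, by left; rfl, ladj _ _ (by decide) v000 (by decide) (by decide)⟩
  · exact ⟨h1, by right; left; rfl, ladj _ _ (by decide) v110 (by decide) (by decide)⟩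
  · exact ⟨h1, by right; left; rfl, ladj _ _ (by decide) v110 (by decide) (by decide)⟩
  · exact ⟨h2, by right; right; rfl, ladj _ _ (by decide) v011 (by decide) (by decide)⟩
  · exact ⟨h2, by right; right; rfl, ladj _ _ (by decide) v011 (by decide) (by decide)⟩
  · exact ⟨h0, by left; rfl, ladj _ _ (by decide) v000 (by decide) (by decide)⟩

lemma cycAdj : ∀ i : ZMod 6, cubeGraph.lineGraph.Adj (cyc i) (cyc (i + 1)) := by
  intro i
  fin_cases i
  · exact ladj _ _ (by decide) v100 (by decide) (by decide)
  · exact ladj _ _ (by decide) v110 (by decide) (by decide)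
  · exact ladj _ _ (by decide) v111 (by decide) (by decide)
  · exact ladj _ _ (by decide) v011 (by decide) (by decide)
  · exact ladj _ _ (by decide) v001 (by decide) (by decide)
  · exact ladj _ _ (by decide) v000 (by decide) (by decide)

lemma conn_singleton {α : Type*} (G : SimpleGraph α) (v : α) :
    (G.induce {v}).Connected := by
  haveI : Nonempty ({v} : Set α) := ⟨⟨v, rfl⟩⟩
  refine ⟨fun a b => ?_⟩
  have : a = b := Subtype.ext (a.2.trans b.2.symm)
  exact this ▸ SimpleGraph.Reachable.refl _

lemma conn_hub : (cubeGraph.lineGraph.induce hub).Connected := by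
  haveI : Nonempty hub := ⟨⟨h0, Or.inl rfl⟩⟩
  refine ⟨fun a b => ?_⟩
  by_cases h : a.val = b.val
  · exact Subtype.ext h ▸ SimpleGraph.Reachable.refl _
  · refine SimpleGraph.Adj.reachable ?_
    show cubeGraph.lineGraph.Adj a.val b.val
    exact ladj _ _ (fun hv => h (Subtype.ext hv)) v010
      (hub_mem_v010 _ a.2) (hub_mem_v010 _ b.2)

end StmtAux

open StmtAux in
theorem stmt7 : (wheel 6).IsMinorOf cubeGraph.lineGraph := by
  refine ⟨fun w => Option.elim w hub (fun i => {cyc i}), ?_, ?_, ?_, ?_⟩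
  · rintro (_ | i)
    · exact ⟨h0, Or.inl rfl⟩
    · exact ⟨cyc i, rfl⟩
  · rintro (_ | i)
    · exact conn_hub
    · exact conn_singleton _ _
  · rintro (_ | i) (_ | j) hne
    · exact absurd rfl hne
    · show Disjoint hub {cyc j}
      rw [Set.disjoint_singleton_right]
      rintro (h | h | h)
      · exact (cyc_ne_hub j).1 (congrArg Subtype.val h)
      · exact (cyc_ne_hub j).2.1 (congrArg Subtype.val h)
      · exact (cyc_ne_hub j).2.2 (congrArg Subtype.val h)
    · show Disjoint {cyc i} hub
      rw [Set.disjoint_singleton_left]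
      rintro (h | h | h)
      · exact (cyc_ne_hub i).1 (congrArg Subtype.val h)
      · exact (cyc_ne_hub i).2.1 (congrArg Subtype.val h)
      · exact (cyc_ne_hub i).2.2 (congrArg Subtype.val h)
    · have hij : i ≠ j := fun h => hne (congrArg some h)
      show Disjoint ({cyc i} : Set _) {cyc j}
      rw [Set.disjoint_singleton]
      exact fun h => cyc_val_ne i j hij (congrArg Subtype.val h)
  · intro w₁ w₂ hadj
    rw [wheel, SimpleGraph.fromRel_adj] at hadj
    obtain ⟨hne, h | h⟩ := hadj
    · rcases h with ⟨rfl, hw2⟩ | ⟨i, j, rfl, rfl, rfl⟩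
      · obtain ⟨i, rfl⟩ := Option.ne_none_iff_exists'.mp hw2
        obtain ⟨a, ha, hA⟩ := hubAdj i
        exact ⟨a, ha, cyc i, rfl, hA⟩
      · exact ⟨cyc i, rfl, cyc (i + 1), rfl, cycAdj i⟩
    · rcases h with ⟨rfl, hw1⟩ | ⟨i, j, rfl, rfl, rfl⟩
      · obtain ⟨i, rfl⟩ := Option.ne_none_iff_exists'.mp hw1
        obtain ⟨a, ha, hA⟩ := hubAdj i
        exact ⟨cyc i, rfl, a, ha, hA.symm⟩
      · exact ⟨cyc (i + 1), rfl, cyc i, rfl, (cycAdj i).symm⟩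
end

section
/- Let n ≥ 5 be an integer. The graph C²ₙ is W₆-minor-free if and only if 5 ≤ n ≤ 8. -/
open SimpleGraph

/-- The square `C²ₙ` of the `n`-cycle. -/
def cycleSq (n : ℕ) : SimpleGraph (ZMod n) :=
  SimpleGraph.fromRel fun i j => j = i + 1 ∨ j = i + 2


lemma cast_ne_cast {n a b : ℕ} (hab : a ≠ b) (ha : a < n) (hb : b < n) :
    (a : ZMod n) ≠ (b : ZMod n) := by
  intro h
  apply hab
  rw [← ZMod.val_natCast_of_lt ha, ← ZMod.val_natCast_of_lt hb, h]

lemma cycleSq_adj_cast {n a b : ℕ} (hb : b < n) (hab : b = a + 1 ∨ b = a + 2) :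
    (cycleSq n).Adj (a : ZMod n) (b : ZMod n) := by
  unfold cycleSq
  rw [SimpleGraph.fromRel_adj]
  refine ⟨cast_ne_cast (by omega) (by omega) hb, Or.inl ?_⟩
  rcases hab with rfl | rfl
  · left; push_cast; ring
  · right; push_cast; ring

lemma cycleSq_adj_last {n : ℕ} (hn : 5 ≤ n) :
    (cycleSq n).Adj ((n-1 : ℕ) : ZMod n) ((0:ℕ) : ZMod n) := by
  unfold cycleSq
  rw [SimpleGraph.fromRel_adj]
  refine ⟨cast_ne_cast (by omega) (by omega) (by omega), Or.inl (Or.inl ?_)⟩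
  have : ((n-1:ℕ) : ZMod n) + 1 = ((n-1+1 : ℕ) : ZMod n) := by push_cast; ring
  rw [this, show n-1+1 = n from by omega, ZMod.natCast_self, Nat.cast_zero]

lemma wheel_adj_hub (i : ZMod 6) : (wheel 6).Adj none (some i) := by
  unfold wheel
  rw [SimpleGraph.fromRel_adj]
  exact ⟨by simp, Or.inl (Or.inl ⟨rfl, by simp⟩)⟩

lemma connected_induce_subsingleton {V : Type*} (G : SimpleGraph V) (s : Set V)
    (hne : s.Nonempty) (hs : ∀ x ∈ s, ∀ y ∈ s, x = y) : (G.induce s).Connected := by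
  haveI : Nonempty ↥s := ⟨⟨hne.choose, hne.choose_spec⟩⟩
  refine ⟨fun x y => ?_⟩
  have : x = y := Subtype.ext (hs _ x.2 _ y.2)
  exact this ▸ Reachable.refl x

lemma adj_of_connected_pair {V : Type*} {G : SimpleGraph V} {u w : V} (hne : u ≠ w)
    (hc : (G.induce {u, w}).Connected) : G.Adj u w := by
  have hu : u ∈ ({u,w} : Set V) := by simp
  have hw : w ∈ ({u,w} : Set V) := by simp
  obtain ⟨p⟩ := hc.preconnected ⟨u, hu⟩ ⟨w, hw⟩
  cases p with
  | nil => exact absurd (by rfl) hne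
  | @cons _ x _ h q =>
    have hx := x.2
    simp only [Set.mem_insert_iff, Set.mem_singleton_iff] at hx
    have hadj : G.Adj u x.1 := h
    rcases hx with hx | hx
    · rw [hx] at hadj; exact absurd hadj (G.irrefl)
    · rwa [hx] at hadj

def phi (n : ℕ) : Option (ZMod 6) → Set (ZMod n)
  | none => {x | x.val = 2 ∨ x.val = 4 ∨ x.val = 6}
  | some i =>
    if i = 0 then {x | x.val = 0}
    else if i = 1 then {x | x.val = 1}
    else if i = 2 then {x | x.val = 3}
    else if i = 3 then {x | x.val = 5}
    else if i = 4 then {x | x.val = 7}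
    else {x | 8 ≤ x.val}

lemma hsix : ∀ i : ZMod 6, i = 0 ∨ i = 1 ∨ i = 2 ∨ i = 3 ∨ i = 4 ∨ i = 5 := by decide

section phival
variable {n : ℕ}
lemma phi_none : phi n none = {x | x.val = 2 ∨ x.val = 4 ∨ x.val = 6} := rfl
lemma phi_s0 : phi n (some 0) = {x | x.val = 0} := rfl
lemma phi_s1 : phi n (some 1) = {x | x.val = 1} := rfl
lemma phi_s2 : phi n (some 2) = {x | x.val = 3} := rfl
lemma phi_s3 : phi n (some 3) = {x | x.val = 5} := rfl
lemma phi_s4 : phi n (some 4) = {x | x.val = 7} := rfl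
lemma phi_s5 : phi n (some 5) = {x | 8 ≤ x.val} := rfl
end phival
lemma phi_nonempty (n : ℕ) (hn : 9 ≤ n) : ∀ w, (phi n w).Nonempty := by
  have m : ∀ a : ℕ, a < n → ((a : ZMod n)).val = a := fun a h => ZMod.val_natCast_of_lt h
  rintro (_ | i)
  · exact ⟨((2:ℕ) : ZMod n), Or.inl (m 2 (by omega))⟩
  · rcases hsix i with rfl|rfl|rfl|rfl|rfl|rfl
    · exact ⟨((0:ℕ) : ZMod n), by rw [phi_s0]; exact m 0 (by omega)⟩
    · exact ⟨((1:ℕ) : ZMod n), by rw [phi_s1]; exact m 1 (by omega)⟩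
    · exact ⟨((3:ℕ) : ZMod n), by rw [phi_s2]; exact m 3 (by omega)⟩
    · exact ⟨((5:ℕ) : ZMod n), by rw [phi_s3]; exact m 5 (by omega)⟩
    · exact ⟨((7:ℕ) : ZMod n), by rw [phi_s4]; exact m 7 (by omega)⟩
    · exact ⟨((8:ℕ) : ZMod n), by rw [phi_s5]; exact (m 8 (by omega)).ge⟩

lemma phi_disj (n : ℕ) (hn : 9 ≤ n) :
    Pairwise fun w₁ w₂ => Disjoint (phi n w₁) (phi n w₂) := by
  rintro (_|i) (_|j) hne
  · exact absurd rfl hne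
  · rcases hsix j with rfl|rfl|rfl|rfl|rfl|rfl <;>
      (rw [Set.disjoint_left, phi_none]; simp only [phi_s0, phi_s1, phi_s2, phi_s3, phi_s4, phi_s5];
       intro a ha hb; simp only [Set.mem_setOf_eq] at ha hb; omega)
  · rcases hsix i with rfl|rfl|rfl|rfl|rfl|rfl <;>
      (rw [Set.disjoint_left, phi_none]; simp only [phi_s0, phi_s1, phi_s2, phi_s3, phi_s4, phi_s5];
       intro a ha hb; simp only [Set.mem_setOf_eq] at ha hb; omega)
  · rcases hsix i with rfl|rfl|rfl|rfl|rfl|rfl <;>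
      rcases hsix j with rfl|rfl|rfl|rfl|rfl|rfl <;>
      first
      | exact absurd rfl hne
      | (rw [Set.disjoint_left]; simp only [phi_s0, phi_s1, phi_s2, phi_s3, phi_s4, phi_s5];
         intro a ha hb; simp only [Set.mem_setOf_eq] at ha hb; omega)

lemma phi_conn (n : ℕ) (hn : 9 ≤ n) : ∀ w, ((cycleSq n).induce (phi n w)).Connected := by
  haveI : NeZero n := ⟨by omega⟩
  have m : ∀ a : ℕ, a < n → ((a : ZMod n)).val = a := fun a h => ZMod.val_natCast_of_lt h
  have msing : ∀ c : ℕ, c < n → ((cycleSq n).induce {x : ZMod n | x.val = c}).Connected := by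
    intro c hc
    refine connected_induce_subsingleton _ _ ⟨((c:ℕ):ZMod n), m c hc⟩ ?_
    intro x hx y hy
    exact ZMod.val_injective n (by rw [Set.mem_setOf_eq.mp hx, Set.mem_setOf_eq.mp hy])
  rintro (_ | i)
  · -- hub {2,4,6}
    rw [phi_none]
    have m2 : ((2:ℕ):ZMod n) ∈ {x : ZMod n | x.val = 2 ∨ x.val = 4 ∨ x.val = 6} := Or.inl (m 2 (by omega))
    have m4 : ((4:ℕ):ZMod n) ∈ {x : ZMod n | x.val = 2 ∨ x.val = 4 ∨ x.val = 6} := Or.inr (Or.inl (m 4 (by omega)))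
    have m6 : ((6:ℕ):ZMod n) ∈ {x : ZMod n | x.val = 2 ∨ x.val = 4 ∨ x.val = 6} := Or.inr (Or.inr (m 6 (by omega)))
    haveI : Nonempty ↥{x : ZMod n | x.val = 2 ∨ x.val = 4 ∨ x.val = 6} := ⟨⟨_, m2⟩⟩
    have h24 : ((cycleSq n).induce {x : ZMod n | x.val = 2 ∨ x.val = 4 ∨ x.val = 6}).Adj ⟨((2:ℕ):ZMod n), m2⟩ ⟨((4:ℕ):ZMod n), m4⟩ :=
      cycleSq_adj_cast (by omega) (Or.inr rfl)
    have h46 : ((cycleSq n).induce {x : ZMod n | x.val = 2 ∨ x.val = 4 ∨ x.val = 6}).Adj ⟨((4:ℕ):ZMod n), m4⟩ ⟨((6:ℕ):ZMod n), m6⟩ :=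
      cycleSq_adj_cast (by omega) (Or.inr rfl)
    have ex : ∀ z : ↥{x : ZMod n | x.val = 2 ∨ x.val = 4 ∨ x.val = 6},
        z = ⟨((2:ℕ):ZMod n), m2⟩ ∨ z = ⟨((4:ℕ):ZMod n), m4⟩ ∨ z = ⟨((6:ℕ):ZMod n), m6⟩ := by
      rintro ⟨z, hz⟩
      rcases hz with h|h|h
      · exact Or.inl (Subtype.ext (ZMod.val_injective n (by rw [h, m 2 (by omega)])))
      · exact Or.inr (Or.inl (Subtype.ext (ZMod.val_injective n (by rw [h, m 4 (by omega)]))))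
      · exact Or.inr (Or.inr (Subtype.ext (ZMod.val_injective n (by rw [h, m 6 (by omega)]))))
    refine ⟨fun x y => ?_⟩
    rcases ex x with rfl|rfl|rfl <;> rcases ex y with rfl|rfl|rfl <;>
      first
      | exact Reachable.refl _
      | exact h24.reachable
      | exact h24.reachable.symm
      | exact h46.reachable
      | exact h46.reachable.symm
      | exact (h24.reachable.trans h46.reachable)
      | exact (h24.reachable.trans h46.reachable).symm
  · rcases hsix i with rfl|rfl|rfl|rfl|rfl|rfl
    · rw [phi_s0]; exact msing 0 (by omega)
    · rw [phi_s1]; exact msing 1 (by omega)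
    · rw [phi_s2]; exact msing 3 (by omega)
    · rw [phi_s3]; exact msing 5 (by omega)
    · rw [phi_s4]; exact msing 7 (by omega)
    · -- tail
      rw [phi_s5]
      have m8 : ((8:ℕ):ZMod n) ∈ {x : ZMod n | 8 ≤ x.val} := (m 8 (by omega)).ge
      haveI : Nonempty ↥{x : ZMod n | 8 ≤ x.val} := ⟨⟨_, m8⟩⟩
      have key : ∀ k : ℕ, ∀ h8 : 8 ≤ k, ∀ hk : k < n,
          ((cycleSq n).induce {x : ZMod n | 8 ≤ x.val}).Reachable ⟨((8:ℕ):ZMod n), m8⟩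
            ⟨((k:ℕ):ZMod n), by rw [Set.mem_setOf_eq, m k hk]; omega⟩ := by
        intro k hk8
        induction k, hk8 using Nat.le_induction with
        | base => intro _; exact Reachable.refl _
        | succ k hk ih =>
          intro hklt
          have hkn : k < n := by omega
          have hadj : ((cycleSq n).induce {x : ZMod n | 8 ≤ x.val}).Adj
              ⟨((k:ℕ):ZMod n), by rw [Set.mem_setOf_eq, m k hkn]; omega⟩
              ⟨(((k+1):ℕ):ZMod n), by rw [Set.mem_setOf_eq, m (k+1) hklt]; omega⟩ :=
            cycleSq_adj_cast hklt (Or.inl rfl)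
          exact (ih hkn).trans hadj.reachable
      have ex : ∀ z : ↥{x : ZMod n | 8 ≤ x.val},
          ((cycleSq n).induce {x : ZMod n | 8 ≤ x.val}).Reachable ⟨((8:ℕ):ZMod n), m8⟩ z := by
        rintro ⟨z, hz⟩
        have h2 : z.val < n := ZMod.val_lt z
        have := key z.val hz h2
        have h1 : ((z.val : ℕ) : ZMod n) = z := ZMod.natCast_rightInverse z
        convert this using 1
        exact Subtype.ext h1.symm
      exact ⟨fun x y => (ex x).symm.trans (ex y)⟩

lemma phi_adj (n : ℕ) (hn : 9 ≤ n) :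
    ∀ ⦃w₁ w₂⦄, (wheel 6).Adj w₁ w₂ → ∃ a ∈ phi n w₁, ∃ b ∈ phi n w₂, (cycleSq n).Adj a b := by
  haveI : NeZero n := ⟨by omega⟩
  have m : ∀ a : ℕ, a < n → ((a : ZMod n)).val = a := fun a h => ZMod.val_natCast_of_lt h
  have hP : ∀ w₁ w₂, ((w₁ = none ∧ w₂ ≠ none) ∨ (∃ i j : ZMod 6, w₁ = some i ∧ w₂ = some j ∧ j = i + 1)) →
      ∃ a ∈ phi n w₁, ∃ b ∈ phi n w₂, (cycleSq n).Adj a b := by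
    rintro w₁ w₂ (⟨rfl, hne2⟩ | ⟨i, j, rfl, rfl, rfl⟩)
    · rcases w₂ with _ | j
      · exact absurd rfl hne2
      rcases hsix j with rfl|rfl|rfl|rfl|rfl|rfl
      · exact ⟨((2:ℕ):ZMod n), Or.inl (m 2 (by omega)), ((0:ℕ):ZMod n),
          by rw [phi_s0]; exact m 0 (by omega), (cycleSq_adj_cast (by omega) (Or.inr rfl)).symm⟩
      · exact ⟨((2:ℕ):ZMod n), Or.inl (m 2 (by omega)), ((1:ℕ):ZMod n),
          by rw [phi_s1]; exact m 1 (by omega), (cycleSq_adj_cast (by omega) (Or.inl rfl)).symm⟩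
      · exact ⟨((2:ℕ):ZMod n), Or.inl (m 2 (by omega)), ((3:ℕ):ZMod n),
          by rw [phi_s2]; exact m 3 (by omega), cycleSq_adj_cast (by omega) (Or.inl rfl)⟩
      · exact ⟨((4:ℕ):ZMod n), Or.inr (Or.inl (m 4 (by omega))), ((5:ℕ):ZMod n),
          by rw [phi_s3]; exact m 5 (by omega), cycleSq_adj_cast (by omega) (Or.inl rfl)⟩
      · exact ⟨((6:ℕ):ZMod n), Or.inr (Or.inr (m 6 (by omega))), ((7:ℕ):ZMod n),
          by rw [phi_s4]; exact m 7 (by omega), cycleSq_adj_cast (by omega) (Or.inl rfl)⟩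
      · exact ⟨((6:ℕ):ZMod n), Or.inr (Or.inr (m 6 (by omega))), ((8:ℕ):ZMod n),
          by rw [phi_s5]; exact (m 8 (by omega)).ge, cycleSq_adj_cast (by omega) (Or.inr rfl)⟩
    · rcases hsix i with rfl|rfl|rfl|rfl|rfl|rfl
      · exact ⟨((0:ℕ):ZMod n), by rw [phi_s0]; exact m 0 (by omega), ((1:ℕ):ZMod n),
          by rw [show (0:ZMod 6)+1 = 1 from by decide, phi_s1]; exact m 1 (by omega),
          cycleSq_adj_cast (by omega) (Or.inl rfl)⟩
      · exact ⟨((1:ℕ):ZMod n), by rw [phi_s1]; exact m 1 (by omega), ((3:ℕ):ZMod n),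
          by rw [show (1:ZMod 6)+1 = 2 from by decide, phi_s2]; exact m 3 (by omega),
          cycleSq_adj_cast (by omega) (Or.inr rfl)⟩
      · exact ⟨((3:ℕ):ZMod n), by rw [phi_s2]; exact m 3 (by omega), ((5:ℕ):ZMod n),
          by rw [show (2:ZMod 6)+1 = 3 from by decide, phi_s3]; exact m 5 (by omega),
          cycleSq_adj_cast (by omega) (Or.inr rfl)⟩
      · exact ⟨((5:ℕ):ZMod n), by rw [phi_s3]; exact m 5 (by omega), ((7:ℕ):ZMod n),
          by rw [show (3:ZMod 6)+1 = 4 from by decide, phi_s4]; exact m 7 (by omega),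
          cycleSq_adj_cast (by omega) (Or.inr rfl)⟩
      · exact ⟨((7:ℕ):ZMod n), by rw [phi_s4]; exact m 7 (by omega), ((8:ℕ):ZMod n),
          by rw [show (4:ZMod 6)+1 = 5 from by decide, phi_s5]; exact (m 8 (by omega)).ge,
          cycleSq_adj_cast (by omega) (Or.inl rfl)⟩
      · refine ⟨(((n-1):ℕ):ZMod n), ?_, ((0:ℕ):ZMod n),
          by rw [show (5:ZMod 6)+1 = 0 from by decide, phi_s0]; exact m 0 (by omega),
          cycleSq_adj_last (by omega)⟩
        rw [phi_s5]
        show 8 ≤ _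
        rw [m (n-1) (by omega)]
        omega
  intro w₁ w₂ hadj
  unfold wheel at hadj
  rw [SimpleGraph.fromRel_adj] at hadj
  rcases hadj.2 with h | h
  · exact hP _ _ h
  · obtain ⟨a, ha, b, hb, hab⟩ := hP _ _ h
    exact ⟨b, hb, a, ha, hab.symm⟩

lemma minor_of_nine (n : ℕ) (hn : 9 ≤ n) : (wheel 6).IsMinorOf (cycleSq n) :=
  ⟨phi n, phi_nonempty n hn, phi_conn n hn, phi_disj n hn, phi_adj n hn⟩

lemma offsets {n : ℕ} (t : ZMod 6 → ZMod n) (T : Finset (ZMod n))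
    (hT : ∀ i, t i ∈ T) (hinj : Function.Injective t) : 6 ≤ T.card := by
  calc (6:ℕ) = (Finset.univ : Finset (ZMod 6)).card := by decide
  _ = (Finset.univ.image t).card := (Finset.card_image_of_injective _ hinj).symm
  _ ≤ T.card := Finset.card_le_card (by
      intro x hx
      obtain ⟨i, -, rfl⟩ := Finset.mem_image.mp hx
      exact hT i)

lemma no_minor_small (n : ℕ) (h5 : 5 ≤ n) (h8 : n ≤ 8) : ¬ (wheel 6).IsMinorOf (cycleSq n) := by
  rintro ⟨φ, hne, hconn, hdisj, hadj⟩
  haveI : NeZero n := ⟨by omega⟩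
  choose a ha b hb hab using fun i : ZMod 6 => hadj (wheel_adj_hub i)
  have hbnotin : ∀ i, b i ∉ φ none := fun i =>
    Set.disjoint_left.mp (hdisj (by simp : (some i : Option (ZMod 6)) ≠ none)) (hb i)
  have hbinj : Function.Injective b := by
    intro i j hij
    by_contra hne'
    exact Set.disjoint_left.mp (hdisj (show (some i : Option (ZMod 6)) ≠ some j by simpa using hne'))
      (hb i) (hij ▸ hb j)
  obtain ⟨u0, hu0⟩ := hne none
  have hcard7 : 7 ≤ n := by
    have hcards : (insert u0 (Finset.univ.image b)).card = 7 := by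
      rw [Finset.card_insert_of_notMem, Finset.card_image_of_injective _ hbinj]
      · rw [Finset.card_univ, ZMod.card]
      · intro hmem
        obtain ⟨i, -, hi⟩ := Finset.mem_image.mp hmem
        exact hbnotin i (hi ▸ hu0)
    calc 7 = (insert u0 (Finset.univ.image b)).card := hcards.symm
    _ ≤ (Finset.univ : Finset (ZMod n)).card := Finset.card_le_card (Finset.subset_univ _)
    _ = n := by rw [Finset.card_univ, ZMod.card]
  set hubF : Finset (ZMod n) := (Set.toFinite (φ none)).toFinset with hhubF
  have hmemhub : ∀ x, x ∈ hubF ↔ x ∈ φ none := fun x => Set.Finite.mem_toFinset _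
  have hsubc : hubF ⊆ (Finset.univ.image b)ᶜ := by
    intro x hx
    rw [Finset.mem_compl]
    intro hmem
    obtain ⟨i, -, rfl⟩ := Finset.mem_image.mp hmem
    exact hbnotin i ((hmemhub _).mp hx)
  have hhle : hubF.card ≤ n - 6 := by
    have hcompl : ((Finset.univ.image b)ᶜ : Finset (ZMod n)).card = n - 6 := by
      rw [Finset.card_compl, Finset.card_image_of_injective _ hbinj, Finset.card_univ,
        ZMod.card, ZMod.card]
    exact hcompl ▸ Finset.card_le_card hsubc
  have hhpos : 0 < hubF.card := Finset.card_pos.mpr ⟨u0, (hmemhub _).mpr hu0⟩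
  have hsingle : ∀ u : ZMod n, φ none = {u} → False := by
    intro u hset
    have hau : ∀ i, a i = u := fun i => by
      have := ha i; rw [hset] at this; exact this
    have hoff : ∀ i, b i - u ∈ ({1, 2, -1, -2} : Finset (ZMod n)) := by
      intro i
      have h := hab i
      rw [hau i] at h
      unfold cycleSq at h
      rw [SimpleGraph.fromRel_adj] at h
      rcases h.2 with (h'|h')|(h'|h')
      · rw [show b i - u = 1 from by rw [h']; ring]; simp
      · rw [show b i - u = 2 from by rw [h']; ring]; simp
      · rw [show b i - u = -1 from by rw [h']; ring]; simp
      · rw [show b i - u = -2 from by rw [h']; ring]; simp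
    have hinj : Function.Injective (fun i => b i - u) := fun i j hij => hbinj (sub_left_inj.mp hij)
    have h6 := offsets _ _ hoff hinj
    have hc4 : ({1, 2, -1, -2} : Finset (ZMod n)).card ≤ 4 := by
      apply le_trans (Finset.card_insert_le _ _)
      apply Nat.succ_le_succ
      apply le_trans (Finset.card_insert_le _ _)
      apply Nat.succ_le_succ
      apply le_trans (Finset.card_insert_le _ _)
      apply Nat.succ_le_succ
      simp
    omega
  rcases (show n = 7 ∨ n = 8 by omega) with rfl | rfl
  · -- n = 7 : hub is a singleton
    have h1 : hubF.card = 1 := by omega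
    obtain ⟨u, hu⟩ := Finset.card_eq_one.mp h1
    refine hsingle u ?_
    ext x
    rw [← hmemhub, hu, Finset.mem_singleton, Set.mem_singleton_iff]
  · rcases (show hubF.card = 1 ∨ hubF.card = 2 by omega) with h1 | h2
    · obtain ⟨u, hu⟩ := Finset.card_eq_one.mp h1
      refine hsingle u ?_
      ext x
      rw [← hmemhub, hu, Finset.mem_singleton, Set.mem_singleton_iff]
    · obtain ⟨u, w, huw, hpair⟩ := Finset.card_eq_two.mp h2
      have hset : φ none = {u, w} := by
        ext x
        rw [← hmemhub, hpair]
        simp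
      have hconnuw := hconn none
      rw [hset] at hconnuw
      have hadjuw : (cycleSq 8).Adj u w := adj_of_connected_pair huw hconnuw
      have hd : w - u = 1 ∨ w - u = 2 ∨ w - u = -1 ∨ w - u = -2 := by
        unfold cycleSq at hadjuw
        rw [SimpleGraph.fromRel_adj] at hadjuw
        rcases hadjuw.2 with (h'|h')|(h'|h')
        · exact Or.inl (by rw [h']; ring)
        · exact Or.inr (Or.inl (by rw [h']; ring))
        · exact Or.inr (Or.inr (Or.inl (by rw [h']; ring)))
        · exact Or.inr (Or.inr (Or.inr (by rw [h']; ring)))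
      have hbneu : ∀ i, b i ≠ u := fun i h => hbnotin i (by rw [hset, h]; simp)
      have hbnew : ∀ i, b i ≠ w := fun i h => hbnotin i (by rw [hset, h]; simp)
      have hoff : ∀ i, b i - u ∈
          (({1, 2, -1, -2, w-u+1, w-u+2, w-u-1, w-u-2} : Finset (ZMod 8)) \ {0, w-u}) := by
        intro i
        rw [Finset.mem_sdiff]
        constructor
        · have hai : a i = u ∨ a i = w := by
            have := ha i; rw [hset] at this; simpa using this
          have h := hab i
          unfold cycleSq at h
          rw [SimpleGraph.fromRel_adj] at h
          rcases hai with hau | haw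
          · rw [hau] at h
            rcases h.2 with (h'|h')|(h'|h')
            · rw [show b i - u = 1 from by rw [h']; ring]; simp
            · rw [show b i - u = 2 from by rw [h']; ring]; simp
            · rw [show b i - u = -1 from by rw [h']; ring]; simp
            · rw [show b i - u = -2 from by rw [h']; ring]; simp
          · rw [haw] at h
            rcases h.2 with (h'|h')|(h'|h')
            · rw [show b i - u = w - u + 1 from by rw [h']; ring]; simp
            · rw [show b i - u = w - u + 2 from by rw [h']; ring]; simp
            · rw [show b i - u = w - u - 1 from by rw [h']; ring]; simp
            · rw [show b i - u = w - u - 2 from by rw [h']; ring]; simp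
        · simp only [Finset.mem_insert, Finset.mem_singleton]
          push_neg
          constructor
          · exact sub_ne_zero_of_ne (hbneu i)
          · intro hdd
            exact hbnew i (sub_left_inj.mp hdd)
      have hinj : Function.Injective (fun i => b i - u) := fun i j hij => hbinj (sub_left_inj.mp hij)
      have h6 := offsets _ _ hoff hinj
      rcases hd with h|h|h|h <;> rw [h] at h6 <;> revert h6 <;> decide

theorem stmt8 (n : ℕ) (hn : 5 ≤ n) :
    ¬ (wheel 6).IsMinorOf (cycleSq n) ↔ n ≤ 8 := by
  constructor
  · intro hno
    by_contra hgt
    exact hno (minor_of_nine n (by omega))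
  · intro hle
    exact no_minor_small n hn hle
end

section
/- Every split of C²₅ is isomorphic to K₆, to K₆ minus an edge, or to DW⁺₄, and each of these three graphs arises as a split of C²₅. -/
open SimpleGraph

/-- The double wheel `DWₙ`: a cycle of length `n` plus two nonadjacent hubs,
each joined to every vertex of the cycle. -/
def doubleWheel (n : ℕ) : SimpleGraph (ZMod n ⊕ Fin 2) :=
  SimpleGraph.fromRel fun a b =>
    match a, b with
    | .inl i, .inl j => j = i + 1
    | .inl _, .inr _ => True
    | .inr _, .inl _ => True
    | .inr _, .inr _ => False

/-- `DW⁺ₙ`: the double wheel together with the edge joining the two hubs. -/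
def doubleWheelPlus (n : ℕ) : SimpleGraph (ZMod n ⊕ Fin 2) :=
  SimpleGraph.fromRel fun a b =>
    match a, b with
    | .inl i, .inl j => j = i + 1
    | _, _ => True

/-- The complete graph `K₆`. -/
def K6 : SimpleGraph (Fin 6) := ⊤

/-- `K₆` minus an edge. -/
def K6e : SimpleGraph (Fin 6) := (⊤ : SimpleGraph (Fin 6)).deleteEdges {s(0, 1)}

/-- The split of a vertex `v` of `G` determined by `X, Y ⊆ N(v)`:
delete `v`, and add two new adjacent vertices (`inr 0` and `inr 1`) joined
to all vertices of `X` and of `Y` respectively. -/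
def splitGraph {V : Type*} (G : SimpleGraph V) (v : V) (X Y : Set V) :
    SimpleGraph ({u : V // u ≠ v} ⊕ Fin 2) :=
  SimpleGraph.fromRel fun a b =>
    match a, b with
    | .inl u, .inl u' => G.Adj u u'
    | .inl u, .inr i => (i = 0 ∧ (u : V) ∈ X) ∨ (i = 1 ∧ (u : V) ∈ Y)
    | .inr _, .inl _ => False
    | .inr _, .inr _ => True

/-- The side conditions on the data of a split of a vertex `v`:
`X, Y ⊆ N(v)`, `X ∪ Y = N(v)` and `|X|, |Y| ≥ 3`. -/
def IsSplitData {V : Type*} (G : SimpleGraph V) (v : V) (X Y : Set V) : Prop :=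
  X ⊆ G.neighborSet v ∧ Y ⊆ G.neighborSet v ∧ X ∪ Y = G.neighborSet v ∧
    3 ≤ X.ncard ∧ 3 ≤ Y.ncard

/-! ### Auxiliary lemmas -/

section Aux

variable {α β : Type*}

lemma cycleSq_five_eq_top : cycleSq 5 = ⊤ := by
  ext a b
  constructor
  · rintro ⟨h, -⟩; exact h
  · intro h
    refine ⟨h.ne, ?_⟩
    revert a b
    decide

lemma coe_ne_val {V : Type*} {v : V} (u : {u : V // u ≠ v}) : (u : V) = v ↔ False := by
  simp [u.2]

/-- One step of adjusting an equivalence so that it sends `a` to `b`. -/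
lemma step_equiv [DecidableEq β] (e : α ≃ β) (a : α) (b : β) :
    ∃ e' : α ≃ β, e' a = b ∧ ∀ x, x ≠ a → e x ≠ b → e' x = e x := by
  refine ⟨e.trans (Equiv.swap (e a) b), by simp, ?_⟩
  intro x hx hb
  simp only [Equiv.trans_apply]
  exact Equiv.swap_apply_of_ne_of_ne (fun h => hx (e.injective h)) hb

/-- An equivalence sending two given points to two given points. -/
lemma exists_equiv_two [DecidableEq β] (e₀ : α ≃ β) (a₁ a₂ : α) (b₁ b₂ : β)
    (ha : a₁ ≠ a₂) (hb : b₁ ≠ b₂) :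
    ∃ e : α ≃ β, e a₁ = b₁ ∧ e a₂ = b₂ := by
  obtain ⟨e₁, he₁, he₁'⟩ := step_equiv e₀ a₁ b₁
  obtain ⟨e₂, he₂, he₂'⟩ := step_equiv e₁ a₂ b₂
  exact ⟨e₂, by rw [he₂' a₁ ha (he₁ ▸ hb), he₁], he₂⟩

/-- An equivalence sending four given points to four given points. -/
lemma exists_equiv_four [DecidableEq β] (e₀ : α ≃ β) (a₁ a₂ a₃ a₄ : α) (b₁ b₂ b₃ b₄ : β)
    (h12 : a₁ ≠ a₂) (h13 : a₁ ≠ a₃) (h14 : a₁ ≠ a₄) (h23 : a₂ ≠ a₃) (h24 : a₂ ≠ a₄)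
    (h34 : a₃ ≠ a₄)
    (g12 : b₁ ≠ b₂) (g13 : b₁ ≠ b₃) (g14 : b₁ ≠ b₄) (g23 : b₂ ≠ b₃) (g24 : b₂ ≠ b₄)
    (g34 : b₃ ≠ b₄) :
    ∃ e : α ≃ β, e a₁ = b₁ ∧ e a₂ = b₂ ∧ e a₃ = b₃ ∧ e a₄ = b₄ := by
  obtain ⟨e₁, k1, p1⟩ := step_equiv e₀ a₁ b₁
  obtain ⟨e₂, k2, p2⟩ := step_equiv e₁ a₂ b₂
  have k1' : e₂ a₁ = b₁ := by rw [p2 a₁ h12 (k1 ▸ g12), k1]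
  obtain ⟨e₃, k3, p3⟩ := step_equiv e₂ a₃ b₃
  have k1'' : e₃ a₁ = b₁ := by rw [p3 a₁ h13 (k1' ▸ g13), k1']
  have k2' : e₃ a₂ = b₂ := by rw [p3 a₂ h23 (k2 ▸ g23), k2]
  obtain ⟨e₄, k4, p4⟩ := step_equiv e₃ a₄ b₄
  refine ⟨e₄, ?_, ?_, ?_, k4⟩
  · rw [p4 a₁ h14 (k1'' ▸ g14), k1'']
  · rw [p4 a₂ h24 (k2' ▸ g24), k2']
  · rw [p4 a₃ h34 (k3 ▸ g34), k3]

/-- Iso between two "complete minus one edge" graphs. -/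
noncomputable def iso_of_forbid1 {G : SimpleGraph α} {H : SimpleGraph β} (e : α ≃ β)
    {a₁ a₂ : α} {b₁ b₂ : β} (h1 : e a₁ = b₁) (h2 : e a₂ = b₂)
    (hG : ∀ x y, G.Adj x y ↔ x ≠ y ∧ s(x, y) ≠ s(a₁, a₂))
    (hH : ∀ x y, H.Adj x y ↔ x ≠ y ∧ s(x, y) ≠ s(b₁, b₂)) :
    G ≃g H := by
  refine ⟨e, fun {x y} => ?_⟩
  rw [hG, hH, ← h1, ← h2]
  simp only [ne_eq, EmbeddingLike.apply_eq_iff_eq, Sym2.eq, Sym2.rel_iff',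
    Prod.mk.injEq, Prod.swap_prod_mk, EmbeddingLike.apply_eq_iff_eq]

/-- Iso between two "complete minus two disjoint edges" graphs. -/
noncomputable def iso_of_forbid2 {G : SimpleGraph α} {H : SimpleGraph β} (e : α ≃ β)
    {a₁ a₂ a₃ a₄ : α} {b₁ b₂ b₃ b₄ : β}
    (h1 : e a₁ = b₁) (h2 : e a₂ = b₂) (h3 : e a₃ = b₃) (h4 : e a₄ = b₄)
    (hG : ∀ x y, G.Adj x y ↔ x ≠ y ∧ s(x, y) ≠ s(a₁, a₂) ∧ s(x, y) ≠ s(a₃, a₄))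
    (hH : ∀ x y, H.Adj x y ↔ x ≠ y ∧ s(x, y) ≠ s(b₁, b₂) ∧ s(x, y) ≠ s(b₃, b₄)) :
    G ≃g H := by
  refine ⟨e, fun {x y} => ?_⟩
  rw [hG, hH, ← h1, ← h2, ← h3, ← h4]
  simp only [ne_eq, EmbeddingLike.apply_eq_iff_eq, Sym2.eq, Sym2.rel_iff',
    Prod.mk.injEq, Prod.swap_prod_mk, EmbeddingLike.apply_eq_iff_eq]

end Aux

section Shapes

abbrev SV (v : ZMod 5) := {u : ZMod 5 // u ≠ v} ⊕ Fin 2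

lemma card_SV (v : ZMod 5) : Fintype.card (SV v) = 6 := by
  have : Fintype.card {u : ZMod 5 // u ≠ v} = 4 := by
    simp [Fintype.card_subtype_compl]
  simp [this]

/-- Adjacency in the split with `X = Y = N(v)`. -/
lemma adj_full_full (v : ZMod 5) (p q : SV v) :
    (splitGraph ⊤ v {u | u ≠ v} {u | u ≠ v}).Adj p q ↔ p ≠ q := by
  rcases p with u|i <;> rcases q with u2|j <;>
    simp [splitGraph, SimpleGraph.fromRel_adj, Subtype.ext_iff, Subtype.prop, coe_ne_val] <;>
    first
    | tauto
    | (revert i j; decide)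
    | (fin_cases i <;> simp [coe_ne_val] <;> tauto)
    | (fin_cases j <;> simp [coe_ne_val] <;> tauto)

lemma adj_full_miss (v a : ZMod 5) (ha : a ≠ v) (p q : SV v) :
    (splitGraph ⊤ v {u | u ≠ v} {u | u ≠ v ∧ u ≠ a}).Adj p q ↔
      p ≠ q ∧ s(p, q) ≠ s(Sum.inl ⟨a, ha⟩, Sum.inr 1) := by
  rcases p with u|i <;> rcases q with u2|j <;>
    simp [splitGraph, SimpleGraph.fromRel_adj, Subtype.ext_iff, Subtype.prop, coe_ne_val,
      Sym2.eq, Sym2.rel_iff', Prod.ext_iff] <;>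
    first
    | tauto
    | (revert i j; decide)
    | (fin_cases i <;> simp [coe_ne_val] <;> tauto)
    | (fin_cases j <;> simp [coe_ne_val] <;> tauto)

lemma adj_miss_full (v a : ZMod 5) (ha : a ≠ v) (p q : SV v) :
    (splitGraph ⊤ v {u | u ≠ v ∧ u ≠ a} {u | u ≠ v}).Adj p q ↔
      p ≠ q ∧ s(p, q) ≠ s(Sum.inl ⟨a, ha⟩, Sum.inr 0) := by
  rcases p with u|i <;> rcases q with u2|j <;>
    simp [splitGraph, SimpleGraph.fromRel_adj, Subtype.ext_iff, Subtype.prop, coe_ne_val,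
      Sym2.eq, Sym2.rel_iff', Prod.ext_iff] <;>
    first
    | tauto
    | (revert i j; decide)
    | (fin_cases i <;> simp [coe_ne_val] <;> tauto)
    | (fin_cases j <;> simp [coe_ne_val] <;> tauto)

lemma adj_miss_miss (v a b : ZMod 5) (ha : a ≠ v) (hb : b ≠ v) (p q : SV v) :
    (splitGraph ⊤ v {u | u ≠ v ∧ u ≠ a} {u | u ≠ v ∧ u ≠ b}).Adj p q ↔
      p ≠ q ∧ s(p, q) ≠ s(Sum.inl ⟨a, ha⟩, Sum.inr 0) ∧
        s(p, q) ≠ s(Sum.inl ⟨b, hb⟩, Sum.inr 1) := by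
  rcases p with u|i <;> rcases q with u2|j <;>
    simp [splitGraph, SimpleGraph.fromRel_adj, Subtype.ext_iff, Subtype.prop, coe_ne_val,
      Sym2.eq, Sym2.rel_iff', Prod.ext_iff] <;>
    first
    | tauto
    | (revert i j; decide)
    | (fin_cases i <;> simp [coe_ne_val] <;> tauto)
    | (fin_cases j <;> simp [coe_ne_val] <;> tauto)

lemma adj_K6e (x y : Fin 6) : K6e.Adj x y ↔ x ≠ y ∧ s(x, y) ≠ s(0, 1) := by
  simp [K6e, SimpleGraph.deleteEdges, and_comm]
  tauto

lemma adj_DWP (x y : ZMod 4 ⊕ Fin 2) :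
    (doubleWheelPlus 4).Adj x y ↔ x ≠ y ∧
      s(x, y) ≠ s(Sum.inl 0, Sum.inl 2) ∧ s(x, y) ≠ s(Sum.inl 1, Sum.inl 3) := by
  rcases x with i|i <;> rcases y with j|j <;>
    simp [doubleWheelPlus, SimpleGraph.fromRel_adj, Sym2.eq, Sym2.rel_iff',
      Prod.ext_iff] <;>
    revert i j <;> decide

lemma card_target6 : (6 : ℕ) = Fintype.card (Fin 6) := by simp

lemma card_targetDW : (6 : ℕ) = Fintype.card (ZMod 4 ⊕ Fin 2) := by
  rw [Fintype.card_sum, ZMod.card, Fintype.card_fin]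

lemma shape_K6 (v : ZMod 5) :
    Nonempty (splitGraph ⊤ v {u | u ≠ v} {u | u ≠ v} ≃g K6) := by
  obtain ⟨e⟩ := Fintype.card_eq.mp ((card_SV v).trans card_target6)
  exact ⟨⟨e, fun {x y} => by
    rw [adj_full_full]
    simp [K6, e.injective.ne_iff]⟩⟩

lemma shape_K6e (v a : ZMod 5) (ha : a ≠ v) :
    Nonempty (splitGraph ⊤ v {u | u ≠ v} {u | u ≠ v ∧ u ≠ a} ≃g K6e) := by
  obtain ⟨e₀⟩ := Fintype.card_eq.mp ((card_SV v).trans card_target6)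
  have d1 : (Sum.inl ⟨a, ha⟩ : SV v) ≠ Sum.inr 1 := by simp
  have d2 : (0 : Fin 6) ≠ 1 := by decide
  obtain ⟨e, h1, h2⟩ := exists_equiv_two e₀ (Sum.inl ⟨a, ha⟩ : SV v) (Sum.inr 1)
    (0 : Fin 6) 1 d1 d2
  exact ⟨iso_of_forbid1 e h1 h2 (adj_full_miss v a ha) adj_K6e⟩

lemma shape_K6e' (v a : ZMod 5) (ha : a ≠ v) :
    Nonempty (splitGraph ⊤ v {u | u ≠ v ∧ u ≠ a} {u | u ≠ v} ≃g K6e) := by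
  obtain ⟨e₀⟩ := Fintype.card_eq.mp ((card_SV v).trans card_target6)
  have d1 : (Sum.inl ⟨a, ha⟩ : SV v) ≠ Sum.inr 0 := by simp
  have d2 : (0 : Fin 6) ≠ 1 := by decide
  obtain ⟨e, h1, h2⟩ := exists_equiv_two e₀ (Sum.inl ⟨a, ha⟩ : SV v) (Sum.inr 0)
    (0 : Fin 6) 1 d1 d2
  exact ⟨iso_of_forbid1 e h1 h2 (adj_miss_full v a ha) adj_K6e⟩

lemma shape_DWP (v a b : ZMod 5) (ha : a ≠ v) (hb : b ≠ v) (hab : a ≠ b) :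
    Nonempty (splitGraph ⊤ v {u | u ≠ v ∧ u ≠ a} {u | u ≠ v ∧ u ≠ b} ≃g
      doubleWheelPlus 4) := by
  obtain ⟨e₀⟩ := Fintype.card_eq.mp ((card_SV v).trans card_targetDW)
  have h12 : (Sum.inl ⟨a, ha⟩ : SV v) ≠ Sum.inr 0 := by simp
  have h13 : (Sum.inl ⟨a, ha⟩ : SV v) ≠ Sum.inl ⟨b, hb⟩ := by
    simp [Subtype.ext_iff, hab]
  have h14 : (Sum.inl ⟨a, ha⟩ : SV v) ≠ Sum.inr 1 := by simp
  have h23 : (Sum.inr 0 : SV v) ≠ Sum.inl ⟨b, hb⟩ := by simp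
  have h24 : (Sum.inr 0 : SV v) ≠ Sum.inr 1 := by simp
  have h34 : (Sum.inl ⟨b, hb⟩ : SV v) ≠ Sum.inr 1 := by simp
  have g12 : (Sum.inl 0 : ZMod 4 ⊕ Fin 2) ≠ Sum.inl 2 := by decide
  have g13 : (Sum.inl 0 : ZMod 4 ⊕ Fin 2) ≠ Sum.inl 1 := by decide
  have g14 : (Sum.inl 0 : ZMod 4 ⊕ Fin 2) ≠ Sum.inl 3 := by decide
  have g23 : (Sum.inl 2 : ZMod 4 ⊕ Fin 2) ≠ Sum.inl 1 := by decide
  have g24 : (Sum.inl 2 : ZMod 4 ⊕ Fin 2) ≠ Sum.inl 3 := by decide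
  have g34 : (Sum.inl 1 : ZMod 4 ⊕ Fin 2) ≠ Sum.inl 3 := by decide
  obtain ⟨e, h1, h2, h3, h4⟩ := exists_equiv_four e₀
    (Sum.inl ⟨a, ha⟩ : SV v) (Sum.inr 0) (Sum.inl ⟨b, hb⟩) (Sum.inr 1)
    (Sum.inl (0 : ZMod 4)) (Sum.inl 2) (Sum.inl 1) (Sum.inl 3)
    h12 h13 h14 h23 h24 h34 g12 g13 g14 g23 g24 g34
  exact ⟨iso_of_forbid2 e h1 h2 h3 h4 (adj_miss_miss v a b ha hb) adj_DWP⟩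

end Shapes

section Classify

lemma ncard_ne (v : ZMod 5) : {u : ZMod 5 | u ≠ v}.ncard = 4 := by
  have h := Set.ncard_add_ncard_compl ({v} : Set (ZMod 5))
  rw [Set.ncard_singleton] at h
  have : ({v} : Set (ZMod 5))ᶜ = {u | u ≠ v} := by ext u; simp
  rw [this] at h
  have h5 : Nat.card (ZMod 5) = 5 := by simp [Nat.card_eq_fintype_card]
  omega

lemma ncard_ne_ne (v a : ZMod 5) (ha : a ≠ v) :
    {u : ZMod 5 | u ≠ v ∧ u ≠ a}.ncard = 3 := by
  have h := Set.ncard_add_ncard_compl ({v, a} : Set (ZMod 5))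
  rw [Set.ncard_pair (Ne.symm ha)] at h
  have : ({v, a} : Set (ZMod 5))ᶜ = {u | u ≠ v ∧ u ≠ a} := by ext u; simp
  rw [this] at h
  have h5 : Nat.card (ZMod 5) = 5 := by simp [Nat.card_eq_fintype_card]
  omega

lemma classify (v : ZMod 5) (X : Set (ZMod 5)) (hX : X ⊆ {u | u ≠ v})
    (h3 : 3 ≤ X.ncard) :
    X = {u | u ≠ v} ∨ ∃ a, a ≠ v ∧ a ∉ X ∧ X = {u | u ≠ v ∧ u ≠ a} := by
  by_cases hfull : {u : ZMod 5 | u ≠ v} ⊆ X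
  · exact Or.inl (Set.Subset.antisymm hX hfull)
  · rw [Set.not_subset] at hfull
    obtain ⟨a, ha, haX⟩ := hfull
    refine Or.inr ⟨a, ha, haX, ?_⟩
    have hsub : X ⊆ {u | u ≠ v ∧ u ≠ a} := fun u hu =>
      ⟨hX hu, fun h => haX (h ▸ hu)⟩
    exact Set.eq_of_subset_of_ncard_le hsub (by rw [ncard_ne_ne v a ha]; exact h3)

end Classify

theorem stmt14 :
    (∀ (v : ZMod 5) (X Y : Set (ZMod 5)), IsSplitData (cycleSq 5) v X Y →
      Nonempty (splitGraph (cycleSq 5) v X Y ≃g K6) ∨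
      Nonempty (splitGraph (cycleSq 5) v X Y ≃g K6e) ∨
      Nonempty (splitGraph (cycleSq 5) v X Y ≃g doubleWheelPlus 4)) ∧
    (∃ (v : ZMod 5) (X Y : Set (ZMod 5)), IsSplitData (cycleSq 5) v X Y ∧
      Nonempty (splitGraph (cycleSq 5) v X Y ≃g K6)) ∧
    (∃ (v : ZMod 5) (X Y : Set (ZMod 5)), IsSplitData (cycleSq 5) v X Y ∧
      Nonempty (splitGraph (cycleSq 5) v X Y ≃g K6e)) ∧
    (∃ (v : ZMod 5) (X Y : Set (ZMod 5)), IsSplitData (cycleSq 5) v X Y ∧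
      Nonempty (splitGraph (cycleSq 5) v X Y ≃g doubleWheelPlus 4)) := by
  have hN : ∀ v : ZMod 5, (cycleSq 5).neighborSet v = {u | u ≠ v} := by
    intro v
    rw [cycleSq_five_eq_top]
    ext u
    simp [SimpleGraph.neighborSet, eq_comm]
  have hsd : ∀ (v a b : ZMod 5), a ≠ v → b ≠ v → a ≠ b →
      IsSplitData (cycleSq 5) v {u | u ≠ v ∧ u ≠ a} {u | u ≠ v ∧ u ≠ b} := by
    intro v a b ha hb hab
    refine ⟨?_, ?_, ?_, ?_, ?_⟩
    · rw [hN]; exact fun u hu => hu.1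
    · rw [hN]; exact fun u hu => hu.1
    · rw [hN]
      ext u
      simp only [Set.mem_union, Set.mem_setOf_eq]
      constructor
      · rintro (⟨h, -⟩ | ⟨h, -⟩) <;> exact h
      · intro h
        by_cases hua : u = a
        · exact Or.inr ⟨h, fun hh => hab (hua ▸ hh.symm ▸ rfl)⟩
        · exact Or.inl ⟨h, hua⟩
    · rw [ncard_ne_ne v a ha]
    · rw [ncard_ne_ne v b hb]
  have hsdf : ∀ v : ZMod 5, IsSplitData (cycleSq 5) v {u | u ≠ v} {u | u ≠ v} := by
    intro v
    refine ⟨by rw [hN], by rw [hN], by rw [hN]; simp, ?_, ?_⟩ <;>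
      rw [ncard_ne] <;> omega
  have hsdm : ∀ (v a : ZMod 5), a ≠ v →
      IsSplitData (cycleSq 5) v {u | u ≠ v} {u | u ≠ v ∧ u ≠ a} := by
    intro v a ha
    refine ⟨by rw [hN], ?_, ?_, ?_, ?_⟩
    · rw [hN]; exact fun u hu => hu.1
    · rw [hN]
      ext u
      simp only [Set.mem_union, Set.mem_setOf_eq]
      tauto
    · rw [ncard_ne]; omega
    · rw [ncard_ne_ne v a ha]
  refine ⟨?_, ?_, ?_, ?_⟩
  · rintro v X Y ⟨hX, hY, hU, hx3, hy3⟩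
    rw [hN] at hX hY hU
    rw [cycleSq_five_eq_top]
    rcases classify v X hX hx3 with hX' | ⟨a, ha, haX, hX'⟩ <;>
      rcases classify v Y hY hy3 with hY' | ⟨b, hb, hbY, hY'⟩
    · left; rw [hX', hY']; exact shape_K6 v
    · right; left; rw [hX', hY']; exact shape_K6e v b hb
    · right; left; rw [hX', hY']; exact shape_K6e' v a ha
    · right; right
      have hab : a ≠ b := by
        intro h
        have : a ∈ X ∪ Y := by rw [hU]; exact ha
        rcases this with h' | h'
        · exact haX h'
        · exact hbY (h ▸ h')
      rw [hX', hY']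
      exact shape_DWP v a b ha hb hab
  · refine ⟨0, {u | u ≠ 0}, {u | u ≠ 0}, hsdf 0, ?_⟩
    rw [cycleSq_five_eq_top]; exact shape_K6 0
  · refine ⟨0, {u | u ≠ 0}, {u | u ≠ 0 ∧ u ≠ 1}, hsdm 0 1 (by decide), ?_⟩
    rw [cycleSq_five_eq_top]; exact shape_K6e 0 1 (by decide)
  · refine ⟨0, {u | u ≠ 0 ∧ u ≠ 1}, {u | u ≠ 0 ∧ u ≠ 2},
      hsd 0 1 2 (by decide) (by decide) (by decide), ?_⟩
    rw [cycleSq_five_eq_top]; exact shape_DWP 0 1 2 (by decide) (by decide) (by decide)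
end

section
/- Every split of K₆ contains W₆ as a minor. -/
/-!
The split of `K₆` has seven vertices, as many as `W₆`, and in fact contains `W₆` as a spanning
subgraph. Let `x, y` be the two new vertices. Since `|X| + |Y| ≥ 6 > 5 = |X ∪ Y|`, some `w` lies
in `X ∩ Y`; it is the hub. Pick `p ∈ X` and `s ∈ Y` distinct from `w` and each other, and let
`q, r` be the two remaining old vertices: the rim is the cycle `x p q r s y`.
-/

open SimpleGraph

theorem SimpleGraph.IsContained.isMinorOf {W V : Type*} {H : SimpleGraph W} {G : SimpleGraph V}
    (h : H ⊑ G) : H.IsMinorOf G := by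
  obtain ⟨f⟩ := h
  refine ⟨fun w => {f w}, fun _ => Set.singleton_nonempty _, fun w => ?_,
    fun a b hab => Set.disjoint_singleton.2 (f.injective.ne hab),
    fun a b hab => ⟨f a, rfl, f b, rfl, f.toHom.map_adj hab⟩⟩
  have : Unique ({f w} : Set V) := Set.uniqueSingleton _
  exact Connected.of_subsingleton

section wheel

variable {n : ℕ} {V : Type*} {G : SimpleGraph V}

def wheel.hom (hub : V) (rim : ZMod n → V) (hspoke : ∀ i, G.Adj hub (rim i))
    (hrim : ∀ i, G.Adj (rim i) (rim (i + 1))) : wheel n →g G where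
  toFun o := o.elim hub rim
  map_rel' := by
    rintro a b ⟨-, (⟨rfl, hb⟩ | ⟨i, j, rfl, rfl, rfl⟩) | (⟨rfl, ha⟩ | ⟨i, j, rfl, rfl, rfl⟩)⟩
    · obtain ⟨j, rfl⟩ := Option.ne_none_iff_exists'.1 hb
      exact hspoke j
    · exact hrim i
    · obtain ⟨j, rfl⟩ := Option.ne_none_iff_exists'.1 ha
      exact (hspoke j).symm
    · exact (hrim i).symm

theorem wheel_isContained (hub : V) (rim : ZMod n → V) (hspoke : ∀ i, G.Adj hub (rim i))
    (hrim : ∀ i, G.Adj (rim i) (rim (i + 1))) (hinj : Function.Injective rim) : wheel n ⊑ G := by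
  refine ⟨⟨wheel.hom hub rim hspoke hrim, ?_⟩⟩
  rintro (_ | i) (_ | j) h
  · rfl
  · exact absurd h (hspoke j).ne
  · exact absurd h (hspoke i).ne'
  · exact congrArg some (hinj h)

end wheel

section splitGraph

variable {V : Type*} {G : SimpleGraph V} {v : V} {X Y : Set V}

theorem splitGraph_adj_inl_inl {u u' : {u // u ≠ v}} :
    (splitGraph G v X Y).Adj (.inl u) (.inl u') ↔ G.Adj u u' := by
  simp only [splitGraph, fromRel_adj]
  exact ⟨fun h => h.2.elim id .symm, fun h => ⟨by simpa [Subtype.ext_iff] using h.ne, .inl h⟩⟩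

theorem splitGraph_adj_inl_inr_zero {u : {u // u ≠ v}} :
    (splitGraph G v X Y).Adj (.inl u) (.inr 0) ↔ (u : V) ∈ X := by
  simp [splitGraph]

theorem splitGraph_adj_inl_inr_one {u : {u // u ≠ v}} :
    (splitGraph G v X Y).Adj (.inl u) (.inr 1) ↔ (u : V) ∈ Y := by
  simp [splitGraph]

theorem splitGraph_adj_inr_inr : (splitGraph G v X Y).Adj (.inr 0) (.inr 1) := by
  simp [splitGraph]

theorem wheel_six_isContained_splitGraph {w p q r s : {u // u ≠ v}}
    (hwX : (w : V) ∈ X) (hwY : (w : V) ∈ Y) (hp : (p : V) ∈ X) (hs : (s : V) ∈ Y)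
    (hwp : G.Adj w p) (hwq : G.Adj w q) (hwr : G.Adj w r) (hws : G.Adj w s)
    (hpq : G.Adj p q) (hqr : G.Adj q r) (hrs : G.Adj r s)
    (hpr : p ≠ r) (hps : p ≠ s) (hqs : q ≠ s) :
    wheel 6 ⊑ splitGraph G v X Y := by
  refine wheel_isContained (.inl w) ![.inr 0, .inl p, .inl q, .inl r, .inl s, .inr 1] ?_ ?_ ?_
  · intro i
    fin_cases i
    exacts [splitGraph_adj_inl_inr_zero.2 hwX, splitGraph_adj_inl_inl.2 hwp,
      splitGraph_adj_inl_inl.2 hwq, splitGraph_adj_inl_inl.2 hwr, splitGraph_adj_inl_inl.2 hws,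
      splitGraph_adj_inl_inr_one.2 hwY]
  · intro i
    fin_cases i
    exacts [(splitGraph_adj_inl_inr_zero.2 hp).symm, splitGraph_adj_inl_inl.2 hpq,
      splitGraph_adj_inl_inl.2 hqr, splitGraph_adj_inl_inl.2 hrs,
      splitGraph_adj_inl_inr_one.2 hs, splitGraph_adj_inr_inr.symm]
  · intro i j h
    fin_cases i <;> fin_cases j <;> first | rfl | simp_all [Subtype.ext_iff]

end splitGraph

theorem Set.exists_distinct_of_ncard_union_lt {α : Type*} {X Y : Set α}
    (hXY : (X ∪ Y).ncard < X.ncard + Y.ncard) (hX : 2 ≤ X.ncard) (hY : 3 ≤ Y.ncard) :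
    ∃ w p s, w ∈ X ∧ w ∈ Y ∧ p ∈ X ∧ s ∈ Y ∧ w ≠ p ∧ w ≠ s ∧ p ≠ s := by
  obtain ⟨w, hwX, hwY⟩ : (X ∩ Y).Nonempty := by
    refine Set.nonempty_of_ncard_ne_zero fun h => ?_
    have := Set.ncard_union_add_ncard_inter X Y (Set.finite_of_ncard_pos (by omega))
      (Set.finite_of_ncard_pos (by omega))
    omega
  obtain ⟨p, hp, hpw⟩ := Set.exists_mem_notMem_of_ncard_lt_ncard
    (by rw [Set.ncard_singleton]; omega : ({w} : Set α).ncard < X.ncard)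
  obtain ⟨s, hs, hswp⟩ := Set.exists_mem_notMem_of_ncard_lt_ncard
    ((Set.ncard_insert_le w {p}).trans_lt (by rw [Set.ncard_singleton]; omega) :
      ({w, p} : Set α).ncard < Y.ncard)
  simp only [Set.mem_singleton_iff, Set.mem_insert_iff, not_or] at hpw hswp
  exact ⟨w, p, s, hwX, hwY, hp, hs, Ne.symm hpw, Ne.symm hswp.1, Ne.symm hswp.2⟩

theorem stmt15 (v : Fin 6) (X Y : Set (Fin 6)) (h : IsSplitData K6 v X Y) :
    (wheel 6).IsMinorOf (splitGraph K6 v X Y) := by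
  obtain ⟨-, -, hXY, hX, hY⟩ := h
  have hcard : (X ∪ Y).ncard = 5 := by
    rw [hXY, K6, neighborSet_top, Set.ncard_compl, Set.ncard_singleton, Nat.card_eq_fintype_card,
      Fintype.card_fin]
  have hne : ∀ u ∈ X ∪ Y, u ≠ v := fun u hu =>
    ((mem_neighborSet _ _ _).1 (hXY ▸ hu)).ne'
  obtain ⟨w, p, s, hwX, hwY, hp, hs, hwp, hws, hps⟩ :=
    Set.exists_distinct_of_ncard_union_lt (X := X) (by omega) (by omega) hY
  obtain ⟨q, hq, r, hr, hqr⟩ :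
      ∃ q ∈ ({v, w, p, s} : Finset (Fin 6))ᶜ, ∃ r ∈ ({v, w, p, s} : Finset (Fin 6))ᶜ, q ≠ r := by
    refine Finset.one_lt_card.1 ?_
    have := Finset.card_le_four (a := v) (b := w) (c := p) (d := s)
    rw [Finset.card_compl, Fintype.card_fin]
    omega
  simp only [Finset.mem_compl, Finset.mem_insert, Finset.mem_singleton, not_or] at hq hr
  refine (wheel_six_isContained_splitGraph (G := K6) (w := ⟨w, hne w (.inl hwX)⟩)
    (p := ⟨p, hne p (.inl hp)⟩) (q := ⟨q, hq.1⟩) (r := ⟨r, hr.1⟩) (s := ⟨s, hne s (.inr hs)⟩)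
    hwX hwY hp hs ?_ ?_ ?_ ?_ ?_ ?_ ?_ ?_ ?_ ?_).isMinorOf
  all_goals simp only [K6, top_adj, ne_eq, Subtype.ext_iff]; grind
end
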